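/- arXiv:math/0405367 — 6 statements merged into one kernel-verified Lean document; each statement's English description precedes it below -/
import Mathlib

section
/- Let R be a discrete valuation ring with fraction field K and residue field k. Let F ∈ K((X⁻¹)) be a formal Laurent series all of whose coefficients lie in R, and let F̄ ∈ k((X⁻¹)) be its coefficientwise reduction. Suppose x, y ∈ K[X] with y ≠ 0 satisfy deg(yF − x) < −deg y (so x/y is a convergent of the continued fraction expansion of F). Then there exists c ∈ K, c ≠ 0, such that cx and cy both lie in R[X] and their reductions x̄ and ȳ are not both zero; moreover for any such c one has ȳ ≠ 0 and deg(ȳF̄ − x̄) < −deg ȳ (so x̄/ȳ is a convergent of F̄). -/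
/-!
Dividing `x` and `y` by a coefficient of maximal valuation makes them integral with some
coefficient equal to `1`, so their reductions are not both zero. For the second part, lift `F`
to a Laurent series `G` over `R`. The series `Q G - P` over `R` maps to `c (y F - x)` in
`K((X⁻¹))`, so its coefficients of index `≤ deg y` vanish, and hence so do those of its
reduction `Q̄ F̄ - P̄`. If `Q̄ = 0` this forces `P̄ = 0`, and `deg Q̄ ≤ deg Q = deg y`.
-/

open Polynomial HahnSeries
open scoped Classical

/-- The degree of a formal Laurent series in `X⁻¹`: writing `F = ∑ f_i X^{-i}`
(a `LaurentSeries` in the variable `t = X⁻¹`), `deg F = -min {i : f_i ≠ 0}`,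
with `deg 0 = ⊥`. -/
noncomputable def lsDeg {K : Type*} [Field K] (F : LaurentSeries K) : WithBot ℤ :=
  if F = 0 then ⊥ else ((-F.order : ℤ) : WithBot ℤ)

/-- A polynomial in `X` viewed as an element of `K((X⁻¹))`, i.e. evaluated at the
inverse `X = t⁻¹` of the `LaurentSeries` variable `t`. -/
noncomputable def polyToLS {K : Type*} [Field K] (p : K[X]) : LaurentSeries K :=
  Polynomial.aeval (HahnSeries.single (-1 : ℤ) (1 : K)) p

section Laurent

variable {R S : Type*} [CommRing R] [CommRing S]

noncomputable def polyToLaurent (p : R[X]) : LaurentSeries R :=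
  aeval (single (-1 : ℤ) (1 : R)) p

theorem polyToLS_eq_polyToLaurent {K : Type*} [Field K] (p : K[X]) :
    polyToLS p = polyToLaurent p :=
  rfl

theorem polyToLaurent_monomial (n : ℕ) (a : R) :
    polyToLaurent (monomial n a) = single (-(n : ℤ)) a := by
  rw [polyToLaurent, aeval_monomial, single_pow, one_pow, HahnSeries.algebraMap_apply',
    show algebraMap R (PowerSeries R) a = PowerSeries.C a from rfl, ofPowerSeries_C, C_apply,
    single_mul_single, zero_add, mul_one, nsmul_eq_mul, mul_neg, mul_one]

theorem polyToLaurent_C_mul (a : R) (p : R[X]) :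
    polyToLaurent (C a * p) = HahnSeries.C a * polyToLaurent p := by
  rw [polyToLaurent, map_mul, aeval_C, HahnSeries.algebraMap_apply',
    show algebraMap R (PowerSeries R) a = PowerSeries.C a from rfl, ofPowerSeries_C]
  rfl

theorem coeff_polyToLaurent_neg_natCast (p : R[X]) (m : ℕ) :
    (polyToLaurent p).coeff (-(m : ℤ)) = p.coeff m := by
  induction p using Polynomial.induction_on' with
  | add p q hp hq =>
    simp only [polyToLaurent, map_add, HahnSeries.coeff_add, Polynomial.coeff_add] at hp hq ⊢
    rw [hp, hq]
  | monomial n a => simp [polyToLaurent_monomial, coeff_single, coeff_monomial, eq_comm]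

theorem map_polyToLaurent (f : R →+* S) (p : R[X]) :
    (polyToLaurent p).map f = polyToLaurent (p.map f) := by
  induction p using Polynomial.induction_on' with
  | add p q hp hq =>
    simp only [polyToLaurent, Polynomial.map_add, map_add] at hp hq ⊢
    rw [← hp, ← hq]
    ext; simp
  | monomial n a =>
    rw [Polynomial.map_monomial, polyToLaurent_monomial, polyToLaurent_monomial]
    ext; simp [coeff_single, apply_ite f]

theorem map_polyToLaurent_mul_sub (f : R →+* S) (P Q : R[X]) (G : LaurentSeries R) :
    (polyToLaurent Q * G - polyToLaurent P).map f =
      polyToLaurent (Q.map f) * G.map f - polyToLaurent (P.map f) := by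
  rw [← map_polyToLaurent, ← map_polyToLaurent]
  have hmul := HahnSeries.map_mul (f : R →ₙ+* S) (x := polyToLaurent Q) (y := G)
  ext n
  simp only [HahnSeries.map_coeff, HahnSeries.coeff_sub, map_sub]
  congr 1
  exact congrArg (HahnSeries.coeff · n) hmul

theorem eq_zero_of_coeff_polyToLaurent_nonpos {p : R[X]}
    (hp : ∀ n ≤ 0, (polyToLaurent p).coeff n = 0) : p = 0 := by
  ext m
  rw [← coeff_polyToLaurent_neg_natCast, Polynomial.coeff_zero]
  exact hp _ (by omega)

end Laurent

theorem lsDeg_lt_iff {K : Type*} [Field K] (S : LaurentSeries K) (d : ℤ) :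
    lsDeg S < ((-d : ℤ) : WithBot ℤ) ↔ ∀ n ≤ d, S.coeff n = 0 := by
  unfold lsDeg
  split_ifs with h
  · simp [h, WithBot.bot_lt_coe]
  · rw [WithBot.coe_lt_coe, neg_lt_neg_iff]
    refine ⟨fun hd n hn => coeff_eq_zero_of_lt_order (hn.trans_lt hd), fun hc => ?_⟩
    by_contra! hle
    exact (mt coeff_order_eq_zero.mp h) (hc _ hle)

theorem HahnSeries.exists_map_eq_of_coeff_mem_range {Γ R S F : Type*} [PartialOrder Γ] [Zero R]
    [Zero S] [FunLike F R S] [ZeroHomClass F R S] {f : F} (hf : Function.Injective f)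
    {x : HahnSeries Γ S} (hx : ∀ g, x.coeff g ∈ Set.range f) :
    ∃ y : HahnSeries Γ R, y.map f = x := by
  choose r hr using hx
  refine ⟨⟨r, x.isPWO_support.mono fun g hg => ?_⟩, HahnSeries.ext (funext hr)⟩
  rw [HahnSeries.mem_support, ← hr]
  exact (map_ne_zero_iff f hf).2 hg

theorem ValuationRing.exists_mul_mem_range_and_mul_eq_one {R K : Type*} [CommRing R] [IsDomain R]
    [ValuationRing R] [Field K] [Algebra R K] [IsFractionRing R K] {s : Finset K}
    (hs : ∃ a ∈ s, a ≠ 0) :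
    ∃ c : K, c ≠ 0 ∧ (∀ a ∈ s, c * a ∈ Set.range (algebraMap R K)) ∧ ∃ a ∈ s, c * a = 1 := by
  set v := ValuationRing.valuation R K
  obtain ⟨a₀, ha₀s, ha₀⟩ := hs
  obtain ⟨a, has, hmax⟩ := s.exists_max_image v ⟨a₀, ha₀s⟩
  have ha : a ≠ 0 := by
    rintro rfl
    exact ha₀ (v.zero_iff.1 (le_antisymm (map_zero v ▸ hmax a₀ ha₀s) zero_le))
  refine ⟨a⁻¹, inv_ne_zero ha, fun b hb => ?_, a, has, inv_mul_cancel₀ ha⟩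
  refine (ValuationRing.mem_integer_iff R K _).1 ?_
  rw [Valuation.mem_integer_iff, map_mul, map_inv₀]
  exact inv_mul_le_one_of_le₀ (hmax b hb) zero_le

theorem exists_C_mul_map_eq_and_not_residue_eq_zero {R K : Type*} [CommRing R] [IsDomain R]
    [ValuationRing R] [Field K] [Algebra R K] [IsFractionRing R K] {x y : K[X]} (hy : y ≠ 0) :
    ∃ c : K, c ≠ 0 ∧ ∃ P Q : R[X],
      P.map (algebraMap R K) = C c * x ∧ Q.map (algebraMap R K) = C c * y ∧
      ¬(P.map (IsLocalRing.residue R) = 0 ∧ Q.map (IsLocalRing.residue R) = 0) := by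
  have hlc : y.leadingCoeff ≠ 0 := leadingCoeff_ne_zero.2 hy
  obtain ⟨c, hc, hint, a, has, hca⟩ :=
    ValuationRing.exists_mul_mem_range_and_mul_eq_one (R := R) (s := x.coeffs ∪ y.coeffs)
      ⟨_, Finset.mem_union_right _ (coeff_mem_coeffs hlc), hlc⟩
  have hlift : ∀ p : K[X], p.coeffs ⊆ x.coeffs ∪ y.coeffs →
      ∃ T : R[X], T.map (algebraMap R K) = C c * p := fun p hp =>
    (lifts_iff_set_range _).1 <| (lifts_iff_coeff_lifts _).2 fun n => by
      rw [coeff_C_mul]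
      by_cases h : p.coeff n = 0
      · exact ⟨0, by rw [h, mul_zero, map_zero]⟩
      · exact hint _ (hp (coeff_mem_coeffs h))
  obtain ⟨P, hP⟩ := hlift x Finset.subset_union_left
  obtain ⟨Q, hQ⟩ := hlift y Finset.subset_union_right
  refine ⟨c, hc, P, Q, hP, hQ, ?_⟩
  -- the coefficient `a` of `x` or `y` becomes `1` after scaling
  have hunit : ∀ (T : R[X]) (p : K[X]), T.map (algebraMap R K) = C c * p → a ∈ p.coeffs →
      T.map (IsLocalRing.residue R) ≠ 0 := by
    intro T p hT hap h0
    obtain ⟨n, -, rfl⟩ := mem_coeffs_iff.1 hap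
    have hTn : T.coeff n = 1 := IsFractionRing.injective R K <| by
      rw [← coeff_map, hT, coeff_C_mul, hca, map_one]
    simpa [hTn] using congrArg (Polynomial.coeff · n) h0
  rintro ⟨hP0, hQ0⟩
  rcases Finset.mem_union.1 has with hx | hy
  exacts [hunit P x hP hx hP0, hunit Q y hQ hy hQ0]

theorem coeff_map_mul_sub_eq_zero {R K L : Type*} [CommRing R] [Field K] [Field L]
    {ι : R →+* K} (hι : Function.Injective ι) (g : R →+* L) (G : LaurentSeries R) {x y : K[X]}
    {c : K} {P Q : R[X]} (hP : P.map ι = C c * x) (hQ : Q.map ι = C c * y) {d : ℤ}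
    (h : ∀ n ≤ d, (polyToLS y * G.map ι - polyToLS x).coeff n = 0) :
    ∀ n ≤ d, (polyToLS (Q.map g) * G.map g - polyToLS (P.map g)).coeff n = 0 := by
  intro n hn
  have hE : (polyToLaurent Q * G - polyToLaurent P).coeff n = 0 := by
    refine hι ?_
    rw [map_zero, ← HahnSeries.map_coeff, map_polyToLaurent_mul_sub, hP, hQ, polyToLaurent_C_mul,
      polyToLaurent_C_mul, mul_assoc, ← mul_sub, C_mul_eq_smul, HahnSeries.coeff_smul,
      ← polyToLS_eq_polyToLaurent, ← polyToLS_eq_polyToLaurent, h n hn, smul_zero]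
  rw [polyToLS_eq_polyToLaurent, polyToLS_eq_polyToLaurent, ← map_polyToLaurent_mul_sub,
    HahnSeries.map_coeff, hE, map_zero]

theorem reduction_of_convergent
    {R : Type*} [CommRing R] [IsDomain R] [IsDiscreteValuationRing R]
    {K : Type*} [Field K] [Algebra R K] [IsFractionRing R K]
    (F : LaurentSeries K) (Fbar : LaurentSeries (IsLocalRing.ResidueField R))
    (hF : ∀ n : ℤ, ∃ r : R, algebraMap R K r = F.coeff n)
    (hFbar : ∀ (n : ℤ) (r : R), algebraMap R K r = F.coeff n →
      Fbar.coeff n = IsLocalRing.residue R r)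
    (x y : K[X]) (hy : y ≠ 0)
    (hconv : lsDeg (polyToLS y * F - polyToLS x) < ((-(y.natDegree : ℤ) : ℤ) : WithBot ℤ)) :
    (∃ c : K, c ≠ 0 ∧ ∃ P Q : R[X],
        P.map (algebraMap R K) = Polynomial.C c * x ∧
        Q.map (algebraMap R K) = Polynomial.C c * y ∧
        ¬(P.map (IsLocalRing.residue R) = 0 ∧ Q.map (IsLocalRing.residue R) = 0)) ∧
    (∀ c : K, c ≠ 0 → ∀ P Q : R[X],
        P.map (algebraMap R K) = Polynomial.C c * x →
        Q.map (algebraMap R K) = Polynomial.C c * y →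
        ¬(P.map (IsLocalRing.residue R) = 0 ∧ Q.map (IsLocalRing.residue R) = 0) →
        Q.map (IsLocalRing.residue R) ≠ 0 ∧
        lsDeg (polyToLS (Q.map (IsLocalRing.residue R)) * Fbar -
            polyToLS (P.map (IsLocalRing.residue R))) <
          ((-(((Q.map (IsLocalRing.residue R)).natDegree : ℤ)) : ℤ) : WithBot ℤ)) := by
  refine ⟨exists_C_mul_map_eq_and_not_residue_eq_zero hy, fun c hc P Q hP hQ hPQ => ?_⟩
  have hι := IsFractionRing.injective R K
  obtain ⟨G, rfl⟩ := HahnSeries.exists_map_eq_of_coeff_mem_range hι hF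
  obtain rfl : Fbar = G.map (IsLocalRing.residue R) := by ext n; exact hFbar n _ rfl
  have hvanish := coeff_map_mul_sub_eq_zero hι (IsLocalRing.residue R) G hP hQ
    ((lsDeg_lt_iff _ _).1 hconv)
  have hQbar : Q.map (IsLocalRing.residue R) ≠ 0 := fun h0 =>
    hPQ ⟨eq_zero_of_coeff_polyToLaurent_nonpos fun n hn => by
      simpa [h0, polyToLS, polyToLaurent] using hvanish n (hn.trans (by positivity)), h0⟩
  have hdeg : (Q.map (IsLocalRing.residue R)).natDegree ≤ y.natDegree := calc
    _ ≤ Q.natDegree := natDegree_map_le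
    _ = (Q.map (algebraMap R K)).natDegree := (natDegree_map_eq_of_injective hι Q).symm
    _ = y.natDegree := by rw [hQ, natDegree_C_mul hc]
  exact ⟨hQbar, (lsDeg_lt_iff _ _).2 fun n hn => hvanish n (hn.trans (by exact_mod_cast hdeg))⟩
end

section
/- Let R be a discrete valuation ring with fraction field K and residue field k. Let x, y, x′, y′ ∈ K[X] satisfy x y′ − x′ y = 1. Suppose c, c′ ∈ K are nonzero scalars such that cx, cy, c′x′, c′y′ all lie in R[X], with reductions x̄, ȳ, x̄′, ȳ′ satisfying ȳ ≠ 0 and ȳ′ ≠ 0, and suppose that x̄/ȳ ≠ x̄′/ȳ′ as elements of the rational function field k(X). Then cc′ lies in R and is a unit of R, and x̄ȳ′ − x̄′ȳ equals the reduction of cc′, a nonzero constant of k. -/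
/-!
Scaling `x y' - x' y = 1` by `c c'` shows that `P Q' - P' Q ∈ R[X]` maps to the constant `c c'`,
so it is a constant `r ∈ R`. Its reduction is `P̄ Q̄' - P̄' Q̄`, which is nonzero because the
reduced fractions differ; hence `r` is not in the maximal ideal, i.e. it is a unit.
-/

open Polynomial

theorem Polynomial.exists_eq_C_of_map_eq_C {R S : Type*} [CommRing R] [CommRing S]
    {f : R →+* S} (hf : Function.Injective f) {p : R[X]} {a : S} (h : p.map f = C a) :
    ∃ r, f r = a ∧ p = C r := by
  have hdeg : p.natDegree = 0 := by
    rw [← natDegree_map_eq_of_injective hf, h, natDegree_C]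
  refine ⟨p.coeff 0, ?_, eq_C_of_natDegree_eq_zero hdeg⟩
  simpa [coeff_map] using congrArg (coeff · 0) h

theorem Polynomial.map_mul_sub_mul_eq_C {R K : Type*} [CommRing R] [CommRing K]
    (f : R →+* K) {x y x' y' : K[X]} (huni : x * y' - x' * y = 1) {c c' : K}
    {P Q P' Q' : R[X]} (hP : P.map f = C c * x) (hQ : Q.map f = C c * y)
    (hP' : P'.map f = C c' * x') (hQ' : Q'.map f = C c' * y') :
    (P * Q' - P' * Q).map f = C (c * c') := by
  rw [Polynomial.map_sub, Polynomial.map_mul, Polynomial.map_mul, hP, hQ, hP', hQ', C_mul]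
  linear_combination C c * C c' * huni

theorem RatFunc.mul_sub_mul_ne_zero_of_div_ne_div {k : Type*} [Field k] {p q p' q' : k[X]}
    (hq : q ≠ 0) (hq' : q' ≠ 0)
    (h : algebraMap k[X] (RatFunc k) p / algebraMap k[X] (RatFunc k) q ≠
      algebraMap k[X] (RatFunc k) p' / algebraMap k[X] (RatFunc k) q') :
    p * q' - p' * q ≠ 0 := by
  rw [Ne, div_eq_div_iff (RatFunc.algebraMap_ne_zero hq) (RatFunc.algebraMap_ne_zero hq'),
    ← map_mul, ← map_mul, (IsFractionRing.injective k[X] (RatFunc k)).eq_iff] at h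
  exact sub_ne_zero_of_ne h

theorem reduction_of_unimodular_pair_general
    {R : Type*} [CommRing R] [IsDomain R] [IsDiscreteValuationRing R]
    {K : Type*} [Field K] [Algebra R K] [IsFractionRing R K]
    (x y x' y' : K[X]) (huni : x * y' - x' * y = 1)
    (c c' : K)
    (P Q P' Q' : R[X])
    (hP : P.map (algebraMap R K) = Polynomial.C c * x)
    (hQ : Q.map (algebraMap R K) = Polynomial.C c * y)
    (hP' : P'.map (algebraMap R K) = Polynomial.C c' * x')
    (hQ' : Q'.map (algebraMap R K) = Polynomial.C c' * y')
    (hQne : Q.map (IsLocalRing.residue R) ≠ 0)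
    (hQ'ne : Q'.map (IsLocalRing.residue R) ≠ 0)
    (hdiff :
      (algebraMap (IsLocalRing.ResidueField R)[X]
            (RatFunc (IsLocalRing.ResidueField R)) (P.map (IsLocalRing.residue R))) /
          (algebraMap (IsLocalRing.ResidueField R)[X]
            (RatFunc (IsLocalRing.ResidueField R)) (Q.map (IsLocalRing.residue R))) ≠
        (algebraMap (IsLocalRing.ResidueField R)[X]
            (RatFunc (IsLocalRing.ResidueField R)) (P'.map (IsLocalRing.residue R))) /
          (algebraMap (IsLocalRing.ResidueField R)[X]
            (RatFunc (IsLocalRing.ResidueField R)) (Q'.map (IsLocalRing.residue R)))) :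
    ∃ r : R, IsUnit r ∧ algebraMap R K r = c * c' ∧
      IsLocalRing.residue R r ≠ 0 ∧
      P.map (IsLocalRing.residue R) * Q'.map (IsLocalRing.residue R) -
          P'.map (IsLocalRing.residue R) * Q.map (IsLocalRing.residue R) =
        Polynomial.C (IsLocalRing.residue R r) := by
  obtain ⟨r, hr, hconst⟩ := exists_eq_C_of_map_eq_C (IsFractionRing.injective R K)
    (map_mul_sub_mul_eq_C (algebraMap R K) huni hP hQ hP' hQ')
  have hred : P.map (IsLocalRing.residue R) * Q'.map (IsLocalRing.residue R) -
      P'.map (IsLocalRing.residue R) * Q.map (IsLocalRing.residue R) =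
        C (IsLocalRing.residue R r) := by
    simpa only [Polynomial.map_sub, Polynomial.map_mul, map_C] using
      congrArg (map (IsLocalRing.residue R)) hconst
  have hres : IsLocalRing.residue R r ≠ 0 := by
    have := RatFunc.mul_sub_mul_ne_zero_of_div_ne_div hQne hQ'ne hdiff
    rwa [hred, Ne, C_eq_zero] at this
  exact ⟨r, (IsLocalRing.residue_ne_zero_iff_isUnit r).1 hres, hr, hres, hred⟩

theorem reduction_of_unimodular_pair
    {R : Type*} [CommRing R] [IsDomain R] [IsDiscreteValuationRing R]
    {K : Type*} [Field K] [Algebra R K] [IsFractionRing R K]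
    (x y x' y' : K[X]) (huni : x * y' - x' * y = 1)
    (c c' : K) (hc : c ≠ 0) (hc' : c' ≠ 0)
    (P Q P' Q' : R[X])
    (hP : P.map (algebraMap R K) = Polynomial.C c * x)
    (hQ : Q.map (algebraMap R K) = Polynomial.C c * y)
    (hP' : P'.map (algebraMap R K) = Polynomial.C c' * x')
    (hQ' : Q'.map (algebraMap R K) = Polynomial.C c' * y')
    (hQne : Q.map (IsLocalRing.residue R) ≠ 0)
    (hQ'ne : Q'.map (IsLocalRing.residue R) ≠ 0)
    (hdiff :
      (algebraMap (IsLocalRing.ResidueField R)[X]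
            (RatFunc (IsLocalRing.ResidueField R)) (P.map (IsLocalRing.residue R))) /
          (algebraMap (IsLocalRing.ResidueField R)[X]
            (RatFunc (IsLocalRing.ResidueField R)) (Q.map (IsLocalRing.residue R))) ≠
        (algebraMap (IsLocalRing.ResidueField R)[X]
            (RatFunc (IsLocalRing.ResidueField R)) (P'.map (IsLocalRing.residue R))) /
          (algebraMap (IsLocalRing.ResidueField R)[X]
            (RatFunc (IsLocalRing.ResidueField R)) (Q'.map (IsLocalRing.residue R)))) :
    ∃ r : R, IsUnit r ∧ algebraMap R K r = c * c' ∧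
      IsLocalRing.residue R r ≠ 0 ∧
      P.map (IsLocalRing.residue R) * Q'.map (IsLocalRing.residue R) -
          P'.map (IsLocalRing.residue R) * Q.map (IsLocalRing.residue R) =
        Polynomial.C (IsLocalRing.residue R r) :=
  reduction_of_unimodular_pair_general x y x' y' huni c c' P Q P' Q' hP hQ hP' hQ' hQne hQ'ne hdiff
end

section
/- Let K be a field, F ∈ K((X⁻¹)), and let x, y, x′, y′ ∈ K[X] with y ≠ 0 and y′ ≠ 0. If deg(yF − x) < −deg y′ and deg(y′F − x′) < −deg y, then xy′ = x′y; that is, x/y and x′/y′ are the same rational function. (In particular two convergents of F with this mutual approximation property coincide, so no convergent can lie strictly between two consecutive ones.) -/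
/-! With `A = yF - x` and `B = y'F - x'`, the polynomial `xy' - x'y` equals `yB - y'A`.
Since `deg` is multiplicative, both `deg (yB) < 0` and `deg (y'A) < 0`; by the ultrametric
inequality `xy' - x'y` has negative degree, so it vanishes. -/

open Polynomial HahnSeries
open scoped Classical

section LaurentSeriesDegree

variable {K : Type*} [Field K]

theorem lsDeg_le_iff (F : LaurentSeries K) (c : ℤ) :
    lsDeg F ≤ c ↔ ∀ i < -c, F.coeff i = 0 := by
  by_cases hF : F = 0
  · simp [hF, lsDeg]
  rw [lsDeg, if_neg hF, WithBot.coe_le_coe, neg_le, le_order_iff_forall hF]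

theorem lsDeg_lt_iff_s3 (F : LaurentSeries K) (c : ℤ) :
    lsDeg F < c ↔ ∀ i ≤ -c, F.coeff i = 0 := by
  by_cases hF : F = 0
  · simp [hF, lsDeg]
  rw [lsDeg, if_neg hF, WithBot.coe_lt_coe, neg_lt, ← Int.add_one_le_iff,
    le_order_iff_forall hF]
  simp only [Int.lt_add_one_iff]

theorem lsDeg_sub_lt {A B : LaurentSeries K} {c : ℤ} (hA : lsDeg A < c) (hB : lsDeg B < c) :
    lsDeg (A - B) < c := by
  rw [lsDeg_lt_iff_s3] at hA hB ⊢
  intro i hi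
  rw [HahnSeries.coeff_sub, hA i hi, hB i hi, sub_zero]

theorem lsDeg_mul (A B : LaurentSeries K) : lsDeg (A * B) = lsDeg A + lsDeg B := by
  by_cases hA : A = 0
  · simp [hA, lsDeg]
  by_cases hB : B = 0
  · simp [hB, lsDeg]
  rw [lsDeg, lsDeg, lsDeg, if_neg hA, if_neg hB, if_neg (mul_ne_zero hA hB), order_mul hA hB,
    neg_add, WithBot.coe_add]

theorem polyToLS_monomial (n : ℕ) (a : K) :
    polyToLS (monomial n a) = single (-(n : ℤ)) a := by
  rw [polyToLS, aeval_monomial, single_pow, algebraMap_apply', ← PowerSeries.C_eq_algebraMap,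
    ofPowerSeries_C, C_apply, single_mul_single]
  simp

theorem coeff_polyToLS_neg_natCast (p : K[X]) (n : ℕ) :
    (polyToLS p).coeff (-(n : ℤ)) = p.coeff n := by
  induction p using Polynomial.induction_on' with
  | add f g hf hg =>
    rw [polyToLS, map_add, HahnSeries.coeff_add, ← polyToLS, ← polyToLS, hf, hg,
      Polynomial.coeff_add]
  | monomial m a =>
    rw [polyToLS_monomial, coeff_monomial, coeff_single]
    simp only [neg_inj, Nat.cast_inj, eq_comm]

theorem lsDeg_polyToLS_le (p : K[X]) :
    lsDeg (polyToLS p) ≤ ((p.natDegree : ℤ) : WithBot ℤ) := by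
  rw [lsDeg_le_iff]
  intro i hi
  obtain ⟨n, rfl⟩ : ∃ n : ℕ, i = -(n : ℤ) := ⟨(-i).toNat, by omega⟩
  rw [coeff_polyToLS_neg_natCast]
  exact coeff_eq_zero_of_natDegree_lt (by omega)

theorem eq_zero_of_lsDeg_polyToLS_lt_zero {p : K[X]} (hp : lsDeg (polyToLS p) < (0 : ℤ)) :
    p = 0 := by
  ext n
  rw [← coeff_polyToLS_neg_natCast, Polynomial.coeff_zero]
  exact (lsDeg_lt_iff_s3 _ _).1 hp _ (by omega)

theorem lsDeg_polyToLS_mul_lt_zero {q : K[X]} {A : LaurentSeries K}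
    (hA : lsDeg A < ((-q.natDegree : ℤ) : WithBot ℤ)) : lsDeg (polyToLS q * A) < (0 : ℤ) := by
  rw [lsDeg_mul]
  calc lsDeg (polyToLS q) + lsDeg A
      ≤ (q.natDegree : ℤ) + lsDeg A := add_le_add_left (lsDeg_polyToLS_le q) _
    _ < (q.natDegree : ℤ) + ((-q.natDegree : ℤ) : WithBot ℤ) :=
        WithBot.add_lt_add_left WithBot.coe_ne_bot hA
    _ = (0 : ℤ) := by rw [← WithBot.coe_add, add_neg_cancel]

end LaurentSeriesDegree

theorem mutual_approximants_coincide_general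
    {K : Type*} [Field K] (F : LaurentSeries K)
    (x y x' y' : K[X])
    (h : lsDeg (polyToLS y * F - polyToLS x) < ((-(y'.natDegree : ℤ) : ℤ) : WithBot ℤ))
    (h' : lsDeg (polyToLS y' * F - polyToLS x') < ((-(y.natDegree : ℤ) : ℤ) : WithBot ℤ)) :
    x * y' = x' * y := by
  set A := polyToLS y * F - polyToLS x
  set B := polyToLS y' * F - polyToLS x'
  have hcross : polyToLS (x * y' - x' * y) = polyToLS y * B - polyToLS y' * A := by
    simp only [A, B, polyToLS, map_sub, map_mul]
    ring
  have hneg : lsDeg (polyToLS (x * y' - x' * y)) < (0 : ℤ) := by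
    rw [hcross]
    exact lsDeg_sub_lt (lsDeg_polyToLS_mul_lt_zero h') (lsDeg_polyToLS_mul_lt_zero h)
  exact sub_eq_zero.mp (eq_zero_of_lsDeg_polyToLS_lt_zero hneg)

theorem mutual_approximants_coincide
    {K : Type*} [Field K] (F : LaurentSeries K)
    (x y x' y' : K[X]) (hy : y ≠ 0) (hy' : y' ≠ 0)
    (h : lsDeg (polyToLS y * F - polyToLS x) < ((-(y'.natDegree : ℤ) : ℤ) : WithBot ℤ))
    (h' : lsDeg (polyToLS y' * F - polyToLS x') < ((-(y.natDegree : ℤ) : ℤ) : WithBot ℤ)) :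
    x * y' = x' * y :=
  mutual_approximants_coincide_general F x y x' y' h h'
end

section
/- Let K be a field, let g ≥ 0, and let D ∈ K[X] be a polynomial of degree 2g + 2 that is not the square of a polynomial. Let Y ∈ K((X⁻¹)) satisfy Y² = D. Then for all polynomials x, y ∈ K[X] with y ≠ 0 one has deg(yY − x) ≥ −deg y − (g + 1). (Consequently every partial quotient of the continued fraction expansion of Y = √D has degree at most g + 1.) -/
/-!
Put `E = yY - x` and `F = yY + x`. Then `E * F = y²D - x²` is a nonzero polynomial, because `D`
is not a square in the integrally closed ring `K[X]`; so `E * F` has order `≤ 0` in `X⁻¹`.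
Since `Y` has order `-(g + 1)`, `yY` has order `-(deg y + g + 1) ≤ 0`. If `E` had order
`> deg y + g + 1`, then `F = 2yY - E` would have order `≥ -(deg y + g + 1)`, and `E * F` would
have positive order.
-/

open Polynomial HahnSeries
open scoped Classical

theorem sq_mul_ne_sq {R : Type*} [CommRing R] [IsDomain R] [IsIntegrallyClosed R] {D : R}
    (hD : ¬ ∃ e : R, D = e ^ 2) {y : R} (hy : y ≠ 0) (x : R) : y ^ 2 * D ≠ x ^ 2 := by
  intro h
  obtain ⟨e, rfl⟩ := (IsIntegrallyClosed.pow_dvd_pow_iff two_ne_zero).mp (Dvd.intro D h)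
  exact hD ⟨e, mul_left_cancel₀ (pow_ne_zero 2 hy) (by rw [h, mul_pow])⟩

namespace HahnSeries

variable {Γ R : Type*} [AddCommGroup Γ] [LinearOrder Γ] [IsOrderedAddMonoid Γ] [CommRing R]

theorem orderTop_sub_le_neg_of_orderTop_sq_sub_sq_nonpos {z w : HahnSeries Γ R} {a : Γ}
    (ha : a ≤ 0) (hz : a ≤ z.orderTop) (hzw : (z ^ 2 - w ^ 2).orderTop ≤ 0) :
    (z - w).orderTop ≤ (-a : Γ) := by
  by_contra! hlt
  have ha_le_neg : (a : WithTop Γ) ≤ ↑(-a) :=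
    WithTop.coe_le_coe.mpr (ha.trans (neg_nonneg.mpr ha))
  -- working with `z + z` instead of `2 • z` avoids a case split on the characteristic
  have hadd : (a : WithTop Γ) ≤ (z + w).orderTop := by
    have hzz : (a : WithTop Γ) ≤ (z + z).orderTop :=
      le_trans (by simpa using hz) min_orderTop_le_orderTop_add
    calc (a : WithTop Γ) ≤ min (z + z).orderTop (z - w).orderTop :=
          le_min hzz (ha_le_neg.trans hlt.le)
      _ ≤ ((z + z) - (z - w)).orderTop := min_orderTop_le_orderTop_sub
      _ = (z + w).orderTop := by rw [add_sub_sub_cancel]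
  have hpos : (0 : WithTop Γ) < (z ^ 2 - w ^ 2).orderTop := calc
    (0 : WithTop Γ) = ↑(-a) + ↑a := by
      rw [← WithTop.coe_add, neg_add_cancel, WithTop.coe_zero]
    _ < (z - w).orderTop + (z + w).orderTop :=
      WithTop.add_lt_add_of_lt_of_le WithTop.coe_ne_top hlt hadd
    _ ≤ ((z - w) * (z + w)).orderTop := orderTop_add_le_mul
    _ = (z ^ 2 - w ^ 2).orderTop := by ring_nf
  exact (hpos.trans_le hzw).false

end HahnSeries

section LaurentSeries

variable {K : Type*} [Field K]

theorem le_lsDeg_iff {F : LaurentSeries K} {n : ℤ} :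
    (n : WithBot ℤ) ≤ lsDeg F ↔ F.orderTop ≤ (-n : ℤ) := by
  by_cases hF : F = 0
  · simp [lsDeg, hF]
  · rw [lsDeg, if_neg hF, ← order_eq_orderTop_of_ne_zero hF, WithBot.coe_le_coe,
      WithTop.coe_le_coe]
    omega

theorem coeff_polyToLS_of_pos (p : K[X]) {m : ℤ} (hm : 0 < m) : (polyToLS p).coeff m = 0 := by
  induction p using Polynomial.induction_on' with
  | add p q hp hq =>
    simp only [polyToLS, map_add, HahnSeries.coeff_add] at hp hq ⊢
    rw [hp, hq, add_zero]
  | monomial k a => rw [polyToLS_monomial, coeff_single, if_neg (by omega)]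

theorem orderTop_polyToLS {p : K[X]} (hp : p ≠ 0) :
    (polyToLS p).orderTop = (-(p.natDegree : ℤ) : ℤ) := by
  refine orderTop_eq_of_le ?_ fun m hm ↦ ?_
  · rw [mem_support, coeff_polyToLS_neg_natCast]
    exact leadingCoeff_ne_zero.mpr hp
  · obtain ⟨k, rfl⟩ : ∃ k : ℕ, m = -(k : ℤ) := ⟨(-m).toNat, by
      have : m ≤ 0 := not_lt.mp fun h ↦ hm (coeff_polyToLS_of_pos p h)
      omega⟩
    rw [mem_support, coeff_polyToLS_neg_natCast] at hm
    have := le_natDegree_of_ne_zero hm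
    omega

theorem orderTop_of_sq_eq_polyToLS {Y : LaurentSeries K} {D : K[X]} {g : ℕ}
    (hdeg : D.degree = (2 * g + 2 : ℕ)) (hY : Y ^ 2 = polyToLS D) :
    Y.orderTop = (-(g + 1 : ℤ) : ℤ) := by
  have hD : D ≠ 0 := ne_zero_of_degree_gt (n := ⊥) (by rw [hdeg]; exact WithBot.bot_lt_coe _)
  have h := congrArg orderTop hY
  rw [orderTop_polyToLS hD, natDegree_eq_of_degree_eq_some hdeg, sq, orderTop_mul] at h
  cases hYo : Y.orderTop with
  | top => exact absurd h.symm (by rw [hYo, WithTop.top_add]; exact WithTop.coe_ne_top)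
  | coe c =>
    rw [hYo, ← WithTop.coe_add, WithTop.coe_eq_coe] at h
    rw [WithTop.coe_eq_coe]
    omega

end LaurentSeries

theorem partial_quotients_of_sqrt_bounded_degree
    {K : Type*} [Field K] (g : ℕ) (D : K[X])
    (hdeg : D.degree = (2 * g + 2 : ℕ))
    (hnsq : ¬ ∃ e : K[X], D = e ^ 2)
    (Y : LaurentSeries K) (hY : Y ^ 2 = polyToLS D) :
    ∀ x y : K[X], y ≠ 0 →
      ((-(y.natDegree : ℤ) - (g + 1) : ℤ) : WithBot ℤ) ≤
        lsDeg (polyToLS y * Y - polyToLS x) := by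
  intro x y hy
  have hyY : (polyToLS y * Y).orderTop = (-(y.natDegree : ℤ) - (g + 1) : ℤ) := by
    rw [orderTop_mul, orderTop_polyToLS hy, orderTop_of_sq_eq_polyToLS hdeg hY,
      ← WithTop.coe_add, ← sub_eq_add_neg]
  have hsq : (polyToLS y * Y) ^ 2 - polyToLS x ^ 2 = polyToLS (y ^ 2 * D - x ^ 2) := by
    simp only [polyToLS, map_sub, map_mul, map_pow] at hY ⊢
    rw [mul_pow, hY]
  rw [le_lsDeg_iff]
  refine orderTop_sub_le_neg_of_orderTop_sq_sub_sq_nonpos (by omega) hyY.ge ?_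
  rw [hsq, orderTop_polyToLS (sub_ne_zero.mpr (sq_mul_ne_sq hnsq hy x))]
  exact WithTop.coe_le_coe.mpr (by omega)
end

section
/- Let 𝔽 be a finite field of odd characteristic and let D ∈ 𝔽[X] be a monic polynomial of even positive degree that is not the square of a polynomial in 𝔽[X]. Then the polynomial Pell equation for D has a nontrivial solution: there exist p, q ∈ 𝔽[X] with q ≠ 0 such that p² − Dq² is a nonzero constant of 𝔽. (Equivalently, the continued fraction expansion of √D over 𝔽 is periodic and 𝔽(X, √D) contains a nontrivial unit.) -/
/-!
Let `deg D = 2g`. Truncating the Laurent expansion of `X ^ N √D` gives a polynomial `t` with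
`deg (t² - D X ^ (2N)) < N + g`. Choosing `q ≠ 0` of degree `≤ m` so that `m` prescribed
coefficients of `q t` vanish (a linear system with more unknowns than equations) makes `p / q`,
with `p` the polynomial part of `q t / X ^ N`, so close to `√D` that `ρ = p² - D q²` has degree
`< g`; it is nonzero as `D` is not a square, and `deg q > m - g`. Over a finite field there are
only finitely many such `ρ` and residues of `p, q` modulo `ρ`, so two pairs with different
`deg q` share them, and then `(p₁ + q₁√D)(p₂ - q₂√D) / ρ` is a nontrivial solution of norm `1`.
-/

open Polynomial

theorem sq_sub_mul_sq_ne_zero {R : Type*} [CommRing R] [IsDomain R] [IsIntegrallyClosed R]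
    {D p q : R} (hD : ¬ ∃ e, D = e ^ 2) (hq : q ≠ 0) : p ^ 2 - D * q ^ 2 ≠ 0 := by
  intro h
  have hpq : p ^ 2 = D * q ^ 2 := sub_eq_zero.1 h
  obtain ⟨u, rfl⟩ : q ∣ p := by
    rw [← IsIntegrallyClosed.pow_dvd_pow_iff two_ne_zero]
    exact ⟨D, by rw [hpq, mul_comm]⟩
  refine hD ⟨u, mul_left_cancel₀ (pow_ne_zero 2 hq) ?_⟩
  linear_combination -hpq

theorem exists_sq_sub_mul_sq_eq_one_of_dvd_sub {R : Type*} [CommRing R] [IsDomain R]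
    {D p₁ q₁ p₂ q₂ ρ : R} (hρ : ρ ≠ 0) (h₁ : p₁ ^ 2 - D * q₁ ^ 2 = ρ)
    (h₂ : p₂ ^ 2 - D * q₂ ^ 2 = ρ) (hp : ρ ∣ p₁ - p₂) (hq : ρ ∣ q₁ - q₂)
    (hne : q₁ ^ 2 ≠ q₂ ^ 2) : ∃ P Q : R, Q ≠ 0 ∧ P ^ 2 - D * Q ^ 2 = 1 := by
  obtain ⟨a, ha⟩ := hp
  obtain ⟨b, hb⟩ := hq
  -- `P + Q √D = (p₁ + q₁ √D) (p₂ - q₂ √D) / ρ`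
  have hP : p₁ * p₂ - D * q₁ * q₂ = ρ * (1 - a * p₁ + D * b * q₁) := by
    linear_combination (-p₁) * ha + (D * q₁) * hb + h₁
  have hQ : p₁ * q₂ - p₂ * q₁ = ρ * (a * q₁ - b * p₁) := by
    linear_combination q₁ * ha - p₁ * hb
  refine ⟨1 - a * p₁ + D * b * q₁, a * q₁ - b * p₁, fun h0 => hne ?_, ?_⟩
  · rw [h0, mul_zero] at hQ
    refine (mul_left_cancel₀ hρ ?_).symm
    linear_combination (-(q₂ ^ 2)) * h₁ + q₁ ^ 2 * h₂ + (p₁ * q₂ + p₂ * q₁) * hQ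
  · refine mul_left_cancel₀ (pow_ne_zero 2 hρ) ?_
    -- Brahmagupta's identity `(p₁p₂ - Dq₁q₂)² - D(p₁q₂ - p₂q₁)² = (p₁² - Dq₁²)(p₂² - Dq₂²)`
    linear_combination (p₂ ^ 2 - D * q₂ ^ 2) * h₁ + ρ * h₂
      - ((p₁ * p₂ - D * q₁ * q₂) + ρ * (1 - a * p₁ + D * b * q₁)) * hP
      + D * ((p₁ * q₂ - p₂ * q₁) + ρ * (a * q₁ - b * p₁)) * hQ

namespace Polynomial

theorem natDegree_lt_of_degree_lt {R : Type*} [Semiring R] {p : R[X]} {n : ℕ} (hn : 0 < n)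
    (h : p.degree < n) : p.natDegree < n := by
  rcases eq_or_ne p 0 with rfl | hp
  · simpa
  · exact (natDegree_lt_iff_degree_lt hp).2 h

theorem degree_modByMonic_X_pow_lt_of_coeff_eq_zero {R : Type*} [CommRing R] [Nontrivial R]
    {f : R[X]} {a b : ℕ} (h : ∀ i, a ≤ i → i < b → f.coeff i = 0) :
    (f %ₘ X ^ b).degree < a := by
  rw [degree_lt_iff_coeff_zero]
  intro i hai
  by_cases hib : i < b
  · have hcoeff := congrArg (coeff · i) (modByMonic_add_div f (X ^ b))
    simp only [coeff_add, coeff_X_pow_mul', if_neg (not_le.2 hib), add_zero] at hcoeff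
    rw [hcoeff, h i hai hib]
  · refine coeff_eq_zero_of_degree_lt ((degree_modByMonic_lt f (monic_X_pow b)).trans_le ?_)
    rw [degree_X_pow]
    exact_mod_cast not_lt.1 hib

theorem exists_ne_zero_natDegree_le_coeff_mul_eq_zero {K : Type*} [Field K] (t : K[X])
    (m L : ℕ) : ∃ q : K[X], q ≠ 0 ∧ q.natDegree ≤ m ∧
      ∀ i, L ≤ i → i < L + m → (q * t).coeff i = 0 := by
  let f : degreeLT K (m + 1) →ₗ[K] Fin m → K := LinearMap.pi fun j =>
    lcoeff K (L + j) ∘ₗ LinearMap.mulRight K t ∘ₗ (degreeLT K (m + 1)).subtype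
  have : FiniteDimensional K (degreeLT K (m + 1)) :=
    (degreeLTEquiv K (m + 1)).symm.finiteDimensional
  have hrank : Module.finrank K (Fin m → K) < Module.finrank K (degreeLT K (m + 1)) := by
    simp [(degreeLTEquiv K (m + 1)).finrank_eq]
  obtain ⟨⟨q, hq⟩, hker, hne⟩ :=
    (Submodule.ne_bot_iff _).1 (LinearMap.ker_ne_bot_of_finrank_lt hrank)
  refine ⟨q, fun h => hne (Subtype.ext h), ?_, fun i hLi hiL => ?_⟩
  · exact natDegree_le_of_degree_le (Order.le_of_lt_succ (mem_degreeLT.1 hq))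
  · have hfq : f ⟨q, hq⟩ = 0 := hker
    simpa [f, Nat.add_sub_cancel' hLi] using congrFun hfq ⟨i - L, by omega⟩

theorem exists_monic_sq_sub_degree_lt {K : Type*} [Field K] (h2 : (2 : K) ≠ 0) {A : K[X]}
    {n : ℕ} (hA : A.Monic) (hAdeg : A.natDegree = 2 * n) {k : ℕ} (hk : k ≤ n) :
    ∃ s : K[X], s.Monic ∧ s.natDegree = n ∧ (s ^ 2 - A).degree < ↑(2 * n - k) := by
  induction k with
  | zero =>
    refine ⟨X ^ n, monic_X_pow n, natDegree_X_pow n, ?_⟩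
    have hAdeg' : A.degree = ↑(2 * n) := by rw [degree_eq_natDegree hA.ne_zero, hAdeg]
    rw [← pow_mul, mul_comm n 2, Nat.sub_zero, ← hAdeg']
    exact degree_sub_lt_right (by rw [degree_X_pow, hAdeg']) hA.ne_zero
      (by rw [leadingCoeff_X_pow, hA.leadingCoeff])
  | succ k ih =>
    obtain ⟨s, hs, hsdeg, hE⟩ := ih (by omega)
    set e := (s ^ 2 - A).coeff (2 * n - k - 1)
    have hj : (C (e / 2) * X ^ (n - k - 1)).degree < s.degree := by
      refine (degree_C_mul_X_pow_le _ _).trans_lt ?_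
      rw [degree_eq_natDegree hs.ne_zero, hsdeg]
      exact_mod_cast (by omega : n - k - 1 < n)
    refine ⟨s - C (e / 2) * X ^ (n - k - 1), hs.sub_of_left hj,
      by rw [natDegree_eq_of_degree_eq (degree_sub_eq_left_of_degree_lt hj), hsdeg], ?_⟩
    have hexp : (s - C (e / 2) * X ^ (n - k - 1)) ^ 2 - A
        = (s ^ 2 - A) - C e * (X ^ (n - k - 1) * s)
          + C (e / 2) ^ 2 * X ^ (2 * (n - k - 1)) := by
      rw [show C e = 2 * C (e / 2) by rw [← C_ofNat, ← C_mul, mul_div_cancel₀ _ h2]]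
      ring
    rw [degree_lt_iff_coeff_zero, hexp]
    intro i hi
    rw [coeff_add, coeff_sub, coeff_C_mul, coeff_X_pow_mul', ← C_pow, coeff_C_mul, coeff_X_pow,
      if_pos (by omega), if_neg (by omega), mul_zero, add_zero]
    rcases Nat.le_iff_lt_or_eq.1 hi with hi | rfl
    · rw [(degree_lt_iff_coeff_zero _ _).1 hE i (by omega),
        coeff_eq_zero_of_natDegree_lt (by omega : s.natDegree < i - (n - k - 1))]
      ring
    · rw [show 2 * n - (k + 1) - (n - k - 1) = s.natDegree by omega, hs.coeff_natDegree,
        show 2 * n - (k + 1) = 2 * n - k - 1 by omega]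
      ring

theorem exists_sq_sub_mul_sq_natDegree_add_lt {K : Type*} [Field K] (h2 : (2 : K) ≠ 0)
    {D : K[X]} {g : ℕ} (hD : D.Monic) (hDdeg : D.natDegree = 2 * g) (hg : 0 < g)
    (hnsq : ¬ ∃ e, D = e ^ 2) (m : ℕ) :
    ∃ p q : K[X], q ≠ 0 ∧ q.natDegree ≤ m ∧ p ^ 2 - D * q ^ 2 ≠ 0 ∧
      (p ^ 2 - D * q ^ 2).natDegree + m < q.natDegree + g := by
  set N := 2 * m + g
  obtain ⟨t, -, htdeg, herr⟩ := exists_monic_sq_sub_degree_lt h2 (hD.mul (monic_X_pow (2 * N)))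
    (n := N + g) (by rw [hD.natDegree_mul (monic_X_pow _), natDegree_X_pow]; omega) le_rfl
  obtain ⟨q, hq0, hqm, hqt⟩ := exists_ne_zero_natDegree_le_coeff_mul_eq_zero t m (N - m)
  set p := q * t /ₘ X ^ N
  set A := q * t %ₘ X ^ N
  have hR := sq_sub_mul_sq_ne_zero (p := p) hnsq hq0
  refine ⟨p, q, hq0, hqm, hR, ?_⟩
  have hA : A.natDegree < N - m := natDegree_lt_of_degree_lt (by omega)
    (degree_modByMonic_X_pow_lt_of_coeff_eq_zero fun i hi hi' => hqt i hi (by omega))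
  have hp : p.natDegree ≤ q.natDegree + g := by
    rw [natDegree_divByMonic _ (monic_X_pow N), natDegree_X_pow]
    have := natDegree_mul_le (p := q) (q := t)
    omega
  have herr' : (t ^ 2 - D * X ^ (2 * N)).natDegree < N + g := natDegree_lt_of_degree_lt
    (by omega) (by simpa [show 2 * (N + g) - (N + g) = N + g by omega] using herr)
  -- As `t ≈ X ^ N √D` and `q t = X ^ N p + A`, the norm of `p + q √D` is controlled by `A`.
  have hkey : X ^ (2 * N) * (p ^ 2 - D * q ^ 2)
      = q ^ 2 * (t ^ 2 - D * X ^ (2 * N)) - A * (X ^ N * p + q * t) := by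
    linear_combination (X ^ N * p + q * t) * modByMonic_add_div (q * t) (X ^ N)
  have hlhs : (X ^ (2 * N) * (p ^ 2 - D * q ^ 2)).natDegree
      = 2 * N + (p ^ 2 - D * q ^ 2).natDegree := by
    rw [natDegree_mul (pow_ne_zero _ X_ne_zero) hR, natDegree_X_pow]
  have hu : (q ^ 2 * (t ^ 2 - D * X ^ (2 * N))).natDegree < 2 * N := by
    have := natDegree_mul_le (p := q ^ 2) (q := t ^ 2 - D * X ^ (2 * N))
    have := natDegree_pow_le (p := q) (n := 2)
    omega
  have hv : (A * (X ^ N * p + q * t)).natDegree < 2 * N - m + q.natDegree + g := by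
    have := natDegree_mul_le (p := A) (q := X ^ N * p + q * t)
    have := natDegree_add_le (X ^ N * p) (q * t)
    have hXp := natDegree_mul_le (p := X ^ N) (q := p)
    have := natDegree_mul_le (p := q) (q := t)
    rw [natDegree_X_pow] at hXp
    omega
  have := hkey ▸ natDegree_sub_le (q ^ 2 * (t ^ 2 - D * X ^ (2 * N))) (A * (X ^ N * p + q * t))
  omega

theorem exists_sq_sub_mul_sq_eq_one_of_natDegree_lt {F : Type*} [Field F] [Finite F]
    {D : F[X]} {g : ℕ} (p q : ℕ → F[X]) (hq : Function.Injective fun k => (q k).natDegree)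
    (hR : ∀ k, p k ^ 2 - D * q k ^ 2 ≠ 0)
    (hRdeg : ∀ k, (p k ^ 2 - D * q k ^ 2).natDegree < g) :
    ∃ P Q : F[X], Q ≠ 0 ∧ P ^ 2 - D * Q ^ 2 = 1 := by
  set r := fun k => p k ^ 2 - D * q k ^ 2
  have hr : ∀ k, r k ∈ degreeLT F g := fun k =>
    mem_degreeLT.2 ((natDegree_lt_iff_degree_lt (hR k)).1 (hRdeg k))
  have hmod : ∀ k f, f % r k ∈ degreeLT F g := fun k f =>
    mem_degreeLT.2 ((degree_mod_lt f (hR k)).trans (mem_degreeLT.1 (hr k)))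
  have : Finite (degreeLT F g) := .of_equiv _ (degreeLTEquiv F g).toEquiv.symm
  obtain ⟨k₁, k₂, hne, heq⟩ := Finite.exists_ne_map_eq_of_infinite fun k =>
    ((⟨r k, hr k⟩ : degreeLT F g), (⟨p k % r k, hmod k _⟩ : degreeLT F g),
      (⟨q k % r k, hmod k _⟩ : degreeLT F g))
  simp only [Prod.mk.injEq, Subtype.mk.injEq] at heq
  obtain ⟨hr₁₂, hp₁₂, hq₁₂⟩ := heq
  have hdvd : ∀ f₁ f₂ : F[X], f₁ % r k₁ = f₂ % r k₂ → r k₁ ∣ f₁ - f₂ := fun f₁ f₂ h =>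
    EuclideanDomain.mod_eq_zero.1 (by rw [sub_mod, h, hr₁₂, sub_self])
  refine exists_sq_sub_mul_sq_eq_one_of_dvd_sub (hR k₁) rfl hr₁₂.symm (hdvd _ _ hp₁₂)
    (hdvd _ _ hq₁₂) fun hsq => hne (hq ?_)
  simpa [natDegree_pow] using congrArg natDegree hsq

end Polynomial

theorem polynomial_pell_finite_field
    {F : Type*} [Field F] [Finite F] (hchar : ringChar F ≠ 2)
    (D : F[X]) (hmonic : D.Monic) (hpos : 0 < D.natDegree) (heven : Even D.natDegree)
    (hnsq : ¬ ∃ e : F[X], D = e ^ 2) :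
    ∃ p q : F[X], q ≠ 0 ∧ ∃ κ : F, κ ≠ 0 ∧ p ^ 2 - D * q ^ 2 = Polynomial.C κ := by
  obtain ⟨g, hg⟩ := heven
  choose p q hq0 hqdeg hR hRdeg using fun k : ℕ =>
    exists_sq_sub_mul_sq_natDegree_add_lt (Ring.two_ne_zero hchar) hmonic
      (by omega : _ = 2 * g) (by omega) hnsq (g * k)
  -- `natDegree (q k)` lies in the interval `(g * k - g, g * k]`.
  have hinj : Function.Injective fun k => (q k).natDegree := by
    have hlt : ∀ i j, (q i).natDegree = (q j).natDegree → i < j + 1 := fun i j hij =>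
      Nat.lt_of_mul_lt_mul_left (a := g) <| by
        have := hRdeg i; have := hqdeg j; rw [mul_add_one]; omega
    intro k₁ k₂ h
    have := hlt k₁ k₂ h; have := hlt k₂ k₁ h.symm; omega
  obtain ⟨P, Q, hQ, hPQ⟩ := exists_sq_sub_mul_sq_eq_one_of_natDegree_lt (g := g) p q hinj hR
    fun k => by have := hRdeg k; have := hqdeg k; omega
  exact ⟨P, Q, hQ, 1, one_ne_zero, by rw [hPQ, map_one]⟩
end

section
/- Let D(X) = X⁴ − 2X³ + 3X² + 2X + 1 ∈ ℚ[X]. Then there exist polynomials p, q ∈ ℚ[X] with q ≠ 0 such that p² − Dq² is a nonzero constant of ℚ. (Equivalently, the continued fraction expansion of √D over ℚ is periodic.) -/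
open Polynomial

theorem pell_solution_for_periodic_quartic :
    ∃ p q : ℚ[X], q ≠ 0 ∧ ∃ κ : ℚ, κ ≠ 0 ∧
      p ^ 2 - (X ^ 4 - 2 * X ^ 3 + 3 * X ^ 2 + 2 * X + 1 : ℚ[X]) * q ^ 2 =
        Polynomial.C κ := by
  refine ⟨X ^ 4 - 3 * X ^ 3 + 5 * X ^ 2 - 2 * X, X ^ 2 - 2 * X + 2, ?_, -4, by norm_num, ?_⟩
  · intro h
    have := congrArg (fun r => Polynomial.coeff r 0) h
    simp at this
  · simp only [map_neg, map_ofNat]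
    ring
end
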